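/- arXiv:2512.11400 — 3 statements merged into one kernel-verified Lean document; each statement's English description precedes it below -/
import Mathlib

section
/- Let a, R > 0, λ ∈ R, ε > 0, and f(z) = (z-a)/(z+a). Then the integral of the bimeron energy density e(f) over the disk D_R of radius R centered at 0 equals 4π(1 - λa/(2ε)) · R²/(R²+a²) + π(a²/ε²)( ln((R²+a²)/a²) - R²/(R²+a²) ). -/
open MeasureTheory Real

/-- The (smoothly extended) bimeron energy density of `f(z) = (z-a)/(z+a)`. -/
noncomputable def bimeronDensity (a lam ε : ℝ) (z : ℂ) : ℝ :=
  4 * a ^ 2 / (Complex.normSq z + a ^ 2) ^ 2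
    - 2 * (lam * a / ε) *
        (z.re ^ 2 - z.im ^ 2 + 2 * a * z.re + a ^ 2) / (Complex.normSq z + a ^ 2) ^ 2
    + (2 * a ^ 2 / ε ^ 2) * z.re ^ 2 / (Complex.normSq z + a ^ 2) ^ 2

/-!
Write `z = r e^{iθ}`. Since `(Re z)² = (|z|² + ((Re z)² - (Im z)²)) / 2`, the density is a
function of `|z|²` plus `|z|`-dependent multiples of `(Re z)² - (Im z)² = r² cos 2θ` and
`Re z = r cos θ`, whose integrals over a circle vanish. Only the radial part survives, and the
radial integral reduces to `∫₀^R r dr / (r² + a²)²` and `∫₀^R r³ dr / (r² + a²)²`.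
-/

theorem Complex.polarCoord_symm_eq_circleMap (r θ : ℝ) :
    Complex.polarCoord.symm (r, θ) = circleMap 0 r θ := by
  simp [circleMap_zero, Complex.exp_mul_I, ← Complex.ofReal_cos, ← Complex.ofReal_sin]

theorem integral_ball_eq_integral_circleMap {E : Type*} [NormedAddCommGroup E]
    [NormedSpace ℝ E] {f : ℂ → E} (hf : Continuous f) {R : ℝ} (hR : 0 ≤ R) :
    ∫ z in Metric.ball (0 : ℂ) R, f z
      = ∫ r in 0..R, r • ∫ θ in -π..π, f (circleMap 0 r θ) := by
  have hpolar : Continuous Complex.polarCoord.symm := by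
    simp only [funext Complex.polarCoord_symm_apply]
    fun_prop
  have hdisk : polarCoord.target ∩ Complex.polarCoord.symm ⁻¹' Metric.ball 0 R
      = Set.Ioo 0 R ×ˢ Set.Ioo (-π) π := by
    ext ⟨r, θ⟩
    simp only [polarCoord_target, Set.mem_inter_iff, Set.mem_prod, Set.mem_preimage,
      Metric.mem_ball, dist_zero_right, Complex.norm_polarCoord_symm, Set.mem_Ioi, Set.mem_Ioo]
    constructor
    · rintro ⟨⟨hr, hθ⟩, hrR⟩
      exact ⟨⟨hr, by rwa [abs_of_pos hr] at hrR⟩, hθ⟩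
    · rintro ⟨⟨hr, hrR⟩, hθ⟩
      exact ⟨⟨hr, hθ⟩, by rwa [abs_of_pos hr]⟩
  have hint : IntegrableOn (fun p : ℝ × ℝ => p.1 • f (Complex.polarCoord.symm p))
      (Set.Ioo 0 R ×ˢ Set.Ioo (-π) π) :=
    ((by fun_prop : Continuous fun p : ℝ × ℝ => p.1 • f (Complex.polarCoord.symm p)
      ).continuousOn.integrableOn_compact (isCompact_Icc.prod isCompact_Icc)).mono_set
      (Set.prod_mono Set.Ioo_subset_Icc_self Set.Ioo_subset_Icc_self)
  rw [← integral_indicator measurableSet_ball, ← Complex.integral_comp_polarCoord_symm]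
  have hind (p : ℝ × ℝ) : p.1 • (Metric.ball 0 R).indicator f (Complex.polarCoord.symm p)
      = (Complex.polarCoord.symm ⁻¹' Metric.ball 0 R).indicator
          (fun p => p.1 • f (Complex.polarCoord.symm p)) p := by
    rw [← Set.indicator_comp_right, Set.indicator_smul]
    rfl
  simp_rw [hind]
  rw [setIntegral_indicator (measurableSet_ball.preimage hpolar.measurable), hdisk,
    Measure.volume_eq_prod, setIntegral_prod _ hint, ← integral_Ioc_eq_integral_Ioo,
    ← intervalIntegral.integral_of_le hR]
  refine intervalIntegral.integral_congr fun r _ => ?_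
  dsimp only
  rw [← integral_Ioc_eq_integral_Ioo, ← intervalIntegral.integral_of_le (by linarith [pi_pos]),
    intervalIntegral.integral_smul]
  simp_rw [Complex.polarCoord_symm_eq_circleMap]

theorem integral_circleMap_re (r : ℝ) : ∫ θ in -π..π, (circleMap 0 r θ).re = 0 := by
  simp [circleMap_zero_re]

theorem integral_circleMap_re_sq_sub_im_sq (r : ℝ) :
    ∫ θ in -π..π, ((circleMap 0 r θ).re ^ 2 - (circleMap 0 r θ).im ^ 2) = 0 := by
  simp_rw [circleMap_zero_re, circleMap_zero_im, mul_pow]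
  rw [intervalIntegral.integral_sub ((by fun_prop : Continuous _).intervalIntegrable _ _)
    ((by fun_prop : Continuous _).intervalIntegrable _ _)]
  simp [integral_cos_sq, integral_sin_sq]

theorem normSq_circleMap_zero (r θ : ℝ) : Complex.normSq (circleMap 0 r θ) = r ^ 2 := by
  rw [Complex.normSq_eq_norm_sq, norm_circleMap_zero, sq_abs]

theorem bimeronDensity_eq (a lam ε : ℝ) (z : ℂ) :
    bimeronDensity a lam ε z
      = (4 * a ^ 2 - 2 * lam * a ^ 3 / ε + a ^ 2 / ε ^ 2 * Complex.normSq z)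
          / (Complex.normSq z + a ^ 2) ^ 2
        + (a ^ 2 / ε ^ 2 - 2 * lam * a / ε) / (Complex.normSq z + a ^ 2) ^ 2
          * (z.re ^ 2 - z.im ^ 2)
        - 4 * lam * a ^ 2 / ε / (Complex.normSq z + a ^ 2) ^ 2 * z.re := by
  rw [bimeronDensity, Complex.normSq_apply]
  ring

theorem integral_bimeronDensity_circleMap (a lam ε r : ℝ) :
    ∫ θ in -π..π, bimeronDensity a lam ε (circleMap 0 r θ)
      = 2 * π * ((4 * a ^ 2 - 2 * lam * a ^ 3 / ε + a ^ 2 / ε ^ 2 * r ^ 2)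
          / (r ^ 2 + a ^ 2) ^ 2) := by
  simp_rw [bimeronDensity_eq, normSq_circleMap_zero]
  rw [intervalIntegral.integral_sub, intervalIntegral.integral_add,
    intervalIntegral.integral_const_mul, intervalIntegral.integral_const_mul,
    integral_circleMap_re, integral_circleMap_re_sq_sub_im_sq, intervalIntegral.integral_const]
  · ring
  all_goals exact (by fun_prop : Continuous _).intervalIntegrable _ _

theorem integral_div_sq_add_sq_sq {a : ℝ} (ha : a ≠ 0) (R : ℝ) :
    ∫ r in 0..R, r / (r ^ 2 + a ^ 2) ^ 2 = R ^ 2 / (2 * a ^ 2 * (R ^ 2 + a ^ 2)) := by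
  have hderiv (r : ℝ) :
      HasDerivAt (fun r => -(2 * (r ^ 2 + a ^ 2))⁻¹) (r / (r ^ 2 + a ^ 2) ^ 2) r := by
    refine ((((hasDerivAt_pow 2 r).add_const (a ^ 2)).const_mul 2).fun_inv (by positivity)
      ).fun_neg.congr_deriv ?_
    norm_num
    field_simp
  rw [intervalIntegral.integral_eq_sub_of_hasDerivAt (fun r _ => hderiv r)
    ((by fun_prop (disch := intro _; positivity) : Continuous _).intervalIntegrable _ _)]
  field_simp
  ring

theorem integral_pow_three_div_sq_add_sq_sq {a : ℝ} (ha : a ≠ 0) (R : ℝ) :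
    ∫ r in 0..R, r ^ 3 / (r ^ 2 + a ^ 2) ^ 2
      = (Real.log ((R ^ 2 + a ^ 2) / a ^ 2) - R ^ 2 / (R ^ 2 + a ^ 2)) / 2 := by
  have hderiv (r : ℝ) :
      HasDerivAt (fun r => (Real.log (r ^ 2 + a ^ 2) + a ^ 2 * (r ^ 2 + a ^ 2)⁻¹) / 2)
        (r ^ 3 / (r ^ 2 + a ^ 2) ^ 2) r := by
    have hq := (hasDerivAt_pow 2 r).add_const (a ^ 2)
    refine (((hq.log (by positivity)).fun_add ((hq.fun_inv (by positivity)).const_mul (a ^ 2))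
      ).div_const 2).congr_deriv ?_
    norm_num
    field_simp
    ring
  rw [intervalIntegral.integral_eq_sub_of_hasDerivAt (fun r _ => hderiv r)
    ((by fun_prop (disch := intro _; positivity) : Continuous _).intervalIntegrable _ _),
    Real.log_div (by positivity) (by positivity)]
  field_simp
  ring_nf

theorem continuous_bimeronDensity {a : ℝ} (ha : a ≠ 0) (lam ε : ℝ) :
    Continuous (bimeronDensity a lam ε) := by
  have hden (z : ℂ) : (Complex.normSq z + a ^ 2) ^ 2 ≠ 0 := by
    have := Complex.normSq_nonneg z
    positivity
  unfold bimeronDensity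
  fun_prop (disch := exact hden)

theorem stmt_4_general (a R lam ε : ℝ) (ha : 0 < a) (hR : 0 < R) :
    ∫ z in Metric.ball (0 : ℂ) R, bimeronDensity a lam ε z
      = 4 * π * (1 - lam * a / (2 * ε)) * (R ^ 2 / (R ^ 2 + a ^ 2))
        + π * (a ^ 2 / ε ^ 2) *
            (Real.log ((R ^ 2 + a ^ 2) / a ^ 2) - R ^ 2 / (R ^ 2 + a ^ 2)) := by
  have hradial (r : ℝ) : r • ∫ θ in -π..π, bimeronDensity a lam ε (circleMap 0 r θ)
      = 2 * π * (4 * a ^ 2 - 2 * lam * a ^ 3 / ε) * (r / (r ^ 2 + a ^ 2) ^ 2)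
        + 2 * π * (a ^ 2 / ε ^ 2) * (r ^ 3 / (r ^ 2 + a ^ 2) ^ 2) := by
    rw [integral_bimeronDensity_circleMap, smul_eq_mul]
    ring
  rw [integral_ball_eq_integral_circleMap (continuous_bimeronDensity ha.ne' lam ε) hR.le]
  simp_rw [hradial]
  rw [intervalIntegral.integral_add, intervalIntegral.integral_const_mul,
    intervalIntegral.integral_const_mul, integral_div_sq_add_sq_sq ha.ne',
    integral_pow_three_div_sq_add_sq_sq ha.ne']
  · field_simp
    ring
  all_goals
    exact (by fun_prop (disch := intro _; positivity) : Continuous _).intervalIntegrable _ _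

/-- the bimeron energy on the disk `D_R` equals
`4π(1 - λa/(2ε)) R²/(R²+a²) + π (a²/ε²)(ln((R²+a²)/a²) - R²/(R²+a²))`. -/
theorem stmt_4 (a R lam ε : ℝ) (ha : 0 < a) (hR : 0 < R) (hε : 0 < ε) :
    ∫ z in Metric.ball (0 : ℂ) R, bimeronDensity a lam ε z
      = 4 * π * (1 - lam * a / (2 * ε)) * (R ^ 2 / (R ^ 2 + a ^ 2))
        + π * (a ^ 2 / ε ^ 2) *
            (Real.log ((R ^ 2 + a ^ 2) / a ^ 2) - R ^ 2 / (R ^ 2 + a ^ 2)) :=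
  stmt_4_general a R lam ε ha hR
end

section
/- Let a > 0, z₀ ∈ C, r > 0, and define I(r, z₀) = ∫_{D_r(z₀)} 4a²/(|z|² + a²)² dz (area integral over the disk of radius r centered at z₀). Then I(r, z₀) = 2π ( 1 + (r² - |z₀|² - a²)/√((a² + (r - |z₀|)²)(a² + (r + |z₀|)²)) ). -/
/-!
In polar coordinates around `z₀`, `|z|² + a² = A + B cos (θ - arg z₀)` with
`A = ρ² + |z₀|² + a²` and `B = 2ρ|z₀|`, so the angular integral is
`∫ dθ / (A + B cos θ)² = 2πA / (A² - B²)^{3/2}`. Since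
`A² - B² = (a² + (ρ - |z₀|)²)(a² + (ρ + |z₀|)²)`, the resulting radial density is the
`ρ`-derivative of the right-hand side, which vanishes at `ρ = 0`.
-/

open MeasureTheory Real

section
variable {A B : ℝ}

lemma add_mul_cos_pos_of_abs_lt (h : |B| < A) (θ : ℝ) : 0 < A + B * cos θ := by
  nlinarith [neg_abs_le (B * cos θ), abs_mul B (cos θ),
    mul_le_mul_of_nonneg_left (abs_cos_le_one θ) (abs_nonneg B)]

lemma sq_sub_sq_pos_of_abs_lt (h : |B| < A) : 0 < A ^ 2 - B ^ 2 := by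
  nlinarith [abs_nonneg B, sq_abs B]

/-- The substitution `t = tan (θ/2)` rewritten in Poisson-kernel form: unlike
`2 arctan (√((A - B)/(A + B)) tan (θ/2)) / √(A² - B²)` it is smooth on all of `ℝ`,
and its arctan term vanishes at `θ = ±π`. -/
noncomputable def invAddMulCosPrimitive (A B θ : ℝ) : ℝ :=
  (θ - 2 * arctan (B * sin θ / (A + √(A ^ 2 - B ^ 2) + B * cos θ))) / √(A ^ 2 - B ^ 2)

lemma hasDerivAt_invAddMulCosPrimitive (h : |B| < A) (θ : ℝ) :
    HasDerivAt (invAddMulCosPrimitive A B) (1 / (A + B * cos θ)) θ := by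
  set s := √(A ^ 2 - B ^ 2)
  have hs : 0 < s := sqrt_pos.mpr (sq_sub_sq_pos_of_abs_lt h)
  have hs2 : s ^ 2 = A ^ 2 - B ^ 2 := sq_sqrt (sq_sub_sq_pos_of_abs_lt h).le
  have hX : 0 < A + B * cos θ := add_mul_cos_pos_of_abs_lt h θ
  have hXs : 0 < A + s + B * cos θ := by linarith
  have hu : HasDerivAt (fun θ => B * sin θ / (A + s + B * cos θ))
      (B * (cos θ * (A + s) + B) / (A + s + B * cos θ) ^ 2) θ := by
    refine (((hasDerivAt_sin θ).const_mul B).fun_div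
      (((hasDerivAt_cos θ).const_mul B).const_add (A + s)) hXs.ne').congr_deriv ?_
    linear_combination (B ^ 2 / (A + s + B * cos θ) ^ 2) * sin_sq_add_cos_sq θ
  refine (((hasDerivAt_id θ).sub (hu.arctan.const_mul 2)).div_const s).congr_deriv ?_
  have hsum : (A + s + B * cos θ) ^ 2 + (B * sin θ) ^ 2 = 2 * (A + s) * (A + B * cos θ) := by
    linear_combination hs2 + B ^ 2 * sin_sq_add_cos_sq θ
  have harctan : 1 / (1 + (B * sin θ / (A + s + B * cos θ)) ^ 2) *
      (B * (cos θ * (A + s) + B) / (A + s + B * cos θ) ^ 2)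
      = B * (cos θ * (A + s) + B) / (2 * (A + s) * (A + B * cos θ)) := by
    rw [← hsum]; field_simp
  have hAs : 0 < A + s := by linarith [(abs_nonneg B).trans_lt h]
  rw [harctan]
  field_simp
  linear_combination -hs2

lemma integral_inv_add_mul_cos_sq (h : |B| < A) :
    ∫ θ in -π..π, 1 / (A + B * cos θ) ^ 2 = 2 * π * A / ((A ^ 2 - B ^ 2) * √(A ^ 2 - B ^ 2)) := by
  have hD := (sq_sub_sq_pos_of_abs_lt h).ne'
  have hX := add_mul_cos_pos_of_abs_lt h
  -- `(sin θ / (A + B cos θ))' = (A cos θ + B) / (A + B cos θ)²` and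
  -- `A (A + B cos θ) - B (A cos θ + B) = A² - B²`.
  have hG : ∀ θ, HasDerivAt (fun θ => (A * invAddMulCosPrimitive A B θ
      - B * (sin θ / (A + B * cos θ))) / (A ^ 2 - B ^ 2)) (1 / (A + B * cos θ) ^ 2) θ := by
    intro θ
    refine ((((hasDerivAt_invAddMulCosPrimitive h θ).const_mul A).sub
      (((hasDerivAt_sin θ).fun_div ((hasDerivAt_cos θ).const_mul B |>.const_add A)
        (hX θ).ne').const_mul B)).div_const _).congr_deriv ?_
    field_simp [(hX θ).ne']
    linear_combination (-B ^ 2) * sin_sq_add_cos_sq θ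
  rw [intervalIntegral.integral_eq_sub_of_hasDerivAt (fun θ _ => hG θ)
    ((continuous_const.div (by fun_prop) fun θ => pow_ne_zero 2 (hX θ).ne').intervalIntegrable _ _)]
  simp only [invAddMulCosPrimitive, sin_neg, sin_pi, neg_zero, mul_zero, zero_div, arctan_zero]
  field_simp
  ring

lemma integral_inv_add_mul_cos_sub_sq (h : |B| < A) (φ : ℝ) :
    ∫ θ in -π..π, 1 / (A + B * cos (θ - φ)) ^ 2
      = 2 * π * A / ((A ^ 2 - B ^ 2) * √(A ^ 2 - B ^ 2)) := by
  have hper : Function.Periodic (fun θ => 1 / (A + B * cos θ) ^ 2) (2 * π) := fun θ => by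
    simp only [cos_add_two_pi]
  rw [intervalIntegral.integral_comp_sub_right (fun θ => 1 / (A + B * cos θ) ^ 2),
    ← integral_inv_add_mul_cos_sq h]
  simpa only [show -π - φ + 2 * π = π - φ by ring, show -π + 2 * π = π by ring]
    using hper.intervalIntegral_add_eq (-π - φ) (-π)

end

lemma Complex.normSq_add_ofReal_mul_cos_add_sin_mul_I (z₀ : ℂ) (ρ θ : ℝ) :
    Complex.normSq (z₀ + ρ * (Real.cos θ + Real.sin θ * Complex.I))
      = ρ ^ 2 + ‖z₀‖ ^ 2 + 2 * ρ * ‖z₀‖ * Real.cos (θ - Complex.arg z₀) := by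
  simp only [Complex.normSq_apply, Complex.add_re, Complex.add_im, Complex.mul_re,
    Complex.mul_im, Complex.ofReal_re, Complex.ofReal_im, Complex.I_re, Complex.I_im,
    ← Complex.norm_mul_cos_arg z₀, ← Complex.norm_mul_sin_arg z₀, Real.cos_sub]
  linear_combination
    ρ ^ 2 * Real.sin_sq_add_cos_sq θ + ‖z₀‖ ^ 2 * Real.sin_sq_add_cos_sq (Complex.arg z₀)

open Set in
lemma Complex.setIntegral_ball_eq_integral_polar {E : Type*} [NormedAddCommGroup E]
    [NormedSpace ℝ E] [CompleteSpace E] {f : ℂ → E} (hf : Continuous f) (z₀ : ℂ) {r : ℝ}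
    (hr : 0 ≤ r) :
    ∫ z in Metric.ball z₀ r, f z
      = ∫ ρ in 0..r, ∫ θ in -π..π, ρ • f (z₀ + ρ * (Real.cos θ + Real.sin θ * Complex.I)) := by
  set g : ℝ × ℝ → E := fun p => p.1 • f (z₀ + p.1 * (Real.cos p.2 + Real.sin p.2 * Complex.I))
  have hdisk : MeasurableSet (Ioo 0 r ×ˢ Ioo (-π) π) := measurableSet_Ioo.prod measurableSet_Ioo
  have hg : IntegrableOn g (Ioo 0 r ×ˢ Ioo (-π) π) :=
    (ContinuousOn.integrableOn_compact (isCompact_Icc.prod isCompact_Icc)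
      (by fun_prop : Continuous g).continuousOn).mono_set
      (prod_mono Ioo_subset_Icc_self Ioo_subset_Icc_self)
  have htranslate : ∫ z in Metric.ball z₀ r, f z = ∫ w in Metric.ball 0 r, f (z₀ + w) := by
    rw [← (measurePreserving_add_left volume z₀).setIntegral_preimage_emb
      (measurableEmbedding_addLeft z₀), preimage_add_ball, sub_self]
  have hpolar : EqOn (fun p => p.1 • (Metric.ball 0 r).indicator (fun w => f (z₀ + w))
      (Complex.polarCoord.symm p)) ((Ioo 0 r ×ˢ Ioo (-π) π).indicator g)
      (Ioi 0 ×ˢ Ioo (-π) π) := by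
    rintro p ⟨hp₁ : 0 < p.1, hp₂⟩
    by_cases hpr : p.1 < r
    · simp [g, hpr, hp₁, hp₂, abs_of_pos hp₁]
    · simp [g, hpr, abs_of_pos hp₁]
  rw [htranslate, ← integral_indicator measurableSet_ball, ← Complex.integral_comp_polarCoord_symm]
  change ∫ p in Ioi 0 ×ˢ Ioo (-π) π, _ = _
  rw [setIntegral_congr_fun (measurableSet_Ioi.prod measurableSet_Ioo) hpolar,
    setIntegral_indicator hdisk, prod_inter_prod, Ioi_inter_Ioo, inter_self,
    max_self, Measure.volume_eq_prod, setIntegral_prod g hg,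
    intervalIntegral.integral_of_le hr, integral_Ioc_eq_integral_Ioo]
  refine setIntegral_congr_fun measurableSet_Ioo fun ρ _ => ?_
  rw [intervalIntegral.integral_of_le (by linarith [pi_pos]), integral_Ioc_eq_integral_Ioo]

lemma abs_two_mul_mul_lt_sq_add_sq_add_sq {a : ℝ} (ha : a ≠ 0) (ρ c : ℝ) :
    |2 * ρ * c| < ρ ^ 2 + c ^ 2 + a ^ 2 := by
  have := pow_pos (abs_pos.mpr ha) 2
  rw [abs_lt, ← sq_abs a]
  constructor <;> nlinarith [sq_nonneg (ρ + c), sq_nonneg (ρ - c)]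

noncomputable def bubbleDiskEnergy (a c ρ : ℝ) : ℝ :=
  2 * π * (1 + (ρ ^ 2 - c ^ 2 - a ^ 2) / √((a ^ 2 + (ρ - c) ^ 2) * (a ^ 2 + (ρ + c) ^ 2)))

lemma hasDerivAt_bubbleDiskEnergy {a : ℝ} (ha : a ≠ 0) (c ρ : ℝ) :
    HasDerivAt (bubbleDiskEnergy a c) (ρ * (4 * a ^ 2 * (2 * π * (ρ ^ 2 + c ^ 2 + a ^ 2) /
      (((ρ ^ 2 + c ^ 2 + a ^ 2) ^ 2 - (2 * ρ * c) ^ 2) *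
        √((ρ ^ 2 + c ^ 2 + a ^ 2) ^ 2 - (2 * ρ * c) ^ 2))))) ρ := by
  have hP : 0 < (a ^ 2 + (ρ - c) ^ 2) * (a ^ 2 + (ρ + c) ^ 2) := by positivity
  have hpoly : HasDerivAt (fun x => (a ^ 2 + (x - c) ^ 2) * (a ^ 2 + (x + c) ^ 2))
      (4 * ρ * (ρ ^ 2 - c ^ 2 + a ^ 2)) ρ := by
    refine (((((hasDerivAt_id ρ).sub_const c).pow 2).const_add (a ^ 2)).mul
      ((((hasDerivAt_id ρ).add_const c).pow 2).const_add (a ^ 2))).congr_deriv ?_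
    simp only [id, Pi.pow_apply]
    ring
  refine ((((((hasDerivAt_pow 2 ρ).sub_const (c ^ 2)).sub_const (a ^ 2)).div (hpoly.sqrt hP.ne')
    (sqrt_pos.mpr hP).ne').const_add 1).const_mul (2 * π)).congr_deriv ?_
  rw [show (ρ ^ 2 + c ^ 2 + a ^ 2) ^ 2 - (2 * ρ * c) ^ 2
    = (a ^ 2 + (ρ - c) ^ 2) * (a ^ 2 + (ρ + c) ^ 2) by ring]
  have hS2 := sq_sqrt hP.le
  set S := √((a ^ 2 + (ρ - c) ^ 2) * (a ^ 2 + (ρ + c) ^ 2))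
  have hS : 0 < S := sqrt_pos.mpr hP
  field_simp
  rw [hS2]
  ring

lemma bubbleDiskEnergy_zero {a : ℝ} (ha : a ≠ 0) (c : ℝ) : bubbleDiskEnergy a c 0 = 0 := by
  have h : (a ^ 2 + (0 - c) ^ 2) * (a ^ 2 + (0 + c) ^ 2) = (a ^ 2 + c ^ 2) ^ 2 := by ring
  have hac : 0 < a ^ 2 + c ^ 2 := by positivity
  rw [bubbleDiskEnergy, h, sqrt_sq hac.le]
  field_simp
  ring

/-- the Dirichlet energy of the degree-one bubble of scale `a` on the
off-center disk `D_r(z₀)`: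
`∫_{D_r(z₀)} 4a²/(|z|²+a²)² dz
  = 2π(1 + (r² - |z₀|² - a²)/√((a²+(r-|z₀|)²)(a²+(r+|z₀|)²)))`. -/
theorem stmt_6 (a r : ℝ) (z₀ : ℂ) (ha : 0 < a) (hr : 0 < r) :
    ∫ z in Metric.ball z₀ r, 4 * a ^ 2 / (Complex.normSq z + a ^ 2) ^ 2
      = 2 * π * (1 + (r ^ 2 - Complex.normSq z₀ - a ^ 2) /
          Real.sqrt ((a ^ 2 + (r - ‖z₀‖) ^ 2) *
            (a ^ 2 + (r + ‖z₀‖) ^ 2))) := by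
  have hcont : Continuous fun z => 4 * a ^ 2 / (Complex.normSq z + a ^ 2) ^ 2 :=
    continuous_const.div (by fun_prop) fun z => by have := Complex.normSq_nonneg z; positivity
  have hB := fun ρ => abs_two_mul_mul_lt_sq_add_sq_add_sq ha.ne' ρ ‖z₀‖
  have hD : ∀ ρ : ℝ, 0 < (ρ ^ 2 + ‖z₀‖ ^ 2 + a ^ 2) ^ 2 - (2 * ρ * ‖z₀‖) ^ 2 :=
    fun ρ => sq_sub_sq_pos_of_abs_lt (hB ρ)
  have hangular : ∀ ρ : ℝ, ∫ θ in -π..π, ρ • (4 * a ^ 2 /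
        (Complex.normSq (z₀ + ρ * (Real.cos θ + Real.sin θ * Complex.I)) + a ^ 2) ^ 2)
      = ρ * (4 * a ^ 2 * (2 * π * (ρ ^ 2 + ‖z₀‖ ^ 2 + a ^ 2) /
        (((ρ ^ 2 + ‖z₀‖ ^ 2 + a ^ 2) ^ 2 - (2 * ρ * ‖z₀‖) ^ 2) *
          √((ρ ^ 2 + ‖z₀‖ ^ 2 + a ^ 2) ^ 2 - (2 * ρ * ‖z₀‖) ^ 2)))) := fun ρ => by
    simp_rw [Complex.normSq_add_ofReal_mul_cos_add_sin_mul_I, smul_eq_mul,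
      show ∀ θ, 4 * a ^ 2 / (ρ ^ 2 + ‖z₀‖ ^ 2 + 2 * ρ * ‖z₀‖ * cos (θ - z₀.arg) + a ^ 2) ^ 2
        = 4 * a ^ 2 * (1 / (ρ ^ 2 + ‖z₀‖ ^ 2 + a ^ 2 + 2 * ρ * ‖z₀‖ * cos (θ - z₀.arg)) ^ 2)
        from fun θ => by ring]
    rw [intervalIntegral.integral_const_mul, intervalIntegral.integral_const_mul,
      integral_inv_add_mul_cos_sub_sq (hB ρ)]
  rw [Complex.setIntegral_ball_eq_integral_polar hcont z₀ hr.le,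
    intervalIntegral.integral_congr fun ρ _ => hangular ρ,
    intervalIntegral.integral_eq_sub_of_hasDerivAt
      (fun ρ _ => hasDerivAt_bubbleDiskEnergy ha.ne' ‖z₀‖ ρ) ?_,
    bubbleDiskEnergy_zero ha.ne', sub_zero, bubbleDiskEnergy, Complex.normSq_eq_norm_sq]
  refine Continuous.intervalIntegrable ?_ _ _
  fun_prop (disch := exact fun ρ => (mul_pos (hD ρ) (sqrt_pos.mpr (hD ρ))).ne')
end

section
/- Let m ∈ H^1(T²; S¹) be a smooth map from the flat torus (with circles of circumference 2π) to S¹ satisfying ∫_{T²} |∇m|² dx < 4π². Then there exists φ ∈ H^1(T²; R) with m = e^{iφ}. -/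
open MeasureTheory Real

noncomputable def dx (f : ℝ × ℝ → ℝ) (p : ℝ × ℝ) : ℝ := fderiv ℝ f p (1, 0)

noncomputable def dy (f : ℝ × ℝ → ℝ) (p : ℝ × ℝ) : ℝ := fderiv ℝ f p (0, 1)

noncomputable def gradSqC (m : ℝ × ℝ → ℂ) (p : ℝ × ℝ) : ℝ :=
  (dx (fun q => (m q).re) p) ^ 2 + (dy (fun q => (m q).re) p) ^ 2 +
    (dx (fun q => (m q).im) p) ^ 2 + (dy (fun q => (m q).im) p) ^ 2


/-- A continuous function on a preconnected set taking values in `2πℤ` is constant. -/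
lemma aux_int_const {s : Set (ℝ × ℝ)} (hs : IsPreconnected s) {g : ℝ × ℝ → ℝ}
    (hg : ContinuousOn g s) (hint : ∀ p ∈ s, ∃ n : ℤ, g p = 2 * π * n)
    {p q : ℝ × ℝ} (hp : p ∈ s) (hq : q ∈ s) : g p = g q := by
  have hπ : (0:ℝ) < π := Real.pi_pos
  have key : ∀ p q : ℝ × ℝ, p ∈ s → q ∈ s → g p < g q → False := by
    intro p q hp hq hlt
    obtain ⟨n₁, hn₁⟩ := hint p hp
    obtain ⟨n₂, hn₂⟩ := hint q hq
    have hn : n₁ < n₂ := by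
      by_contra h
      push_neg at h
      have h2 : (n₂ : ℝ) ≤ n₁ := by exact_mod_cast h
      nlinarith
    have hc : 2 * π * n₁ + π ∈ Set.Icc (g p) (g q) := by
      have h3 : (n₁:ℝ) + 1 ≤ n₂ := by exact_mod_cast hn
      constructor
      · rw [hn₁]; nlinarith
      · rw [hn₂]; nlinarith
    obtain ⟨x, hx, hgx⟩ := hs.intermediate_value hp hq hg hc
    obtain ⟨n, hnn⟩ := hint x hx
    rw [hnn] at hgx
    have h4 : ((2*n - 2*n₁ - 1 : ℤ) : ℝ) * π = 0 := by push_cast; linarith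
    rcases mul_eq_zero.mp h4 with h5 | h5
    · have : (2*n - 2*n₁ - 1 : ℤ) = 0 := by exact_mod_cast h5
      omega
    · linarith
  rcases lt_trichotomy (g p) (g q) with h | h | h
  · exact absurd h (fun h' => key p q hp hq h')
  · exact h
  · exact absurd h (fun h' => key q p hq hp h')

/-- Elementary Cauchy–Schwarz for interval integrals of continuous functions. -/
lemma aux_cs {h : ℝ → ℝ} (hh : Continuous h) {T : ℝ} (hT : 0 < T) :
    (∫ t in (0:ℝ)..T, h t) ^ 2 ≤ T * ∫ t in (0:ℝ)..T, (h t) ^ 2 := by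
  set A := ∫ t in (0:ℝ)..T, h t with hA
  set S := ∫ t in (0:ℝ)..T, (h t) ^ 2 with hS
  have h1 : IntervalIntegrable h volume 0 T := hh.intervalIntegrable 0 T
  have h2 : IntervalIntegrable (fun t => (h t) ^ 2) volume 0 T := (hh.pow 2).intervalIntegrable 0 T
  have key : (0:ℝ) ≤ ∫ t in (0:ℝ)..T, (h t - A / T) ^ 2 :=
    intervalIntegral.integral_nonneg hT.le (fun t _ => sq_nonneg _)
  have expand : ∫ t in (0:ℝ)..T, (h t - A / T) ^ 2
      = S - (2 * (A / T)) * A + (A / T) ^ 2 * (T - 0) := by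
    have hcong : ∀ t ∈ Set.uIcc (0:ℝ) T,
        (h t - A / T) ^ 2 = (h t) ^ 2 - (2 * (A / T)) * h t + (A / T) ^ 2 := by
      intro t _; ring
    rw [intervalIntegral.integral_congr hcong,
      intervalIntegral.integral_add ((h2).sub (h1.const_mul _)) intervalIntegrable_const,
      intervalIntegral.integral_sub h2 (h1.const_mul _),
      intervalIntegral.integral_const_mul, intervalIntegral.integral_const]
    simp only [hA, hS, smul_eq_mul]
    ring
  rw [expand] at key
  have hT' : T ≠ 0 := ne_of_gt hT
  have e1 : (2 * (A / T)) * A = 2 * (A ^ 2 / T) := by field_simp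
  have e2 : (A / T) ^ 2 * (T - 0) = A ^ 2 / T := by field_simp; ring
  rw [e1, e2] at key
  have : A ^ 2 / T ≤ S := by linarith
  calc A ^ 2 = A ^ 2 / T * T := by field_simp
  _ ≤ S * T := by apply mul_le_mul_of_nonneg_right this hT.le
  _ = T * S := mul_comm _ _

/-- integrate `f' = I g f` : the solution is an exponential. -/
lemma aux_ode {f : ℝ → ℂ} {g : ℝ → ℝ}
    (hf : ∀ r, HasDerivAt f (Complex.I * (g r : ℂ) * f r) r)
    (hg : Continuous g) (x : ℝ) :
    f x = Complex.exp (Complex.I * ((∫ t in (0:ℝ)..x, g t : ℝ) : ℂ)) * f 0 := by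
  set G : ℝ → ℝ := fun r => ∫ t in (0:ℝ)..r, g t with hGdef
  have hGd : ∀ r, HasDerivAt G (g r) r := by
    intro r
    exact intervalIntegral.integral_hasDerivAt_right (hg.intervalIntegrable _ _)
      (hg.stronglyMeasurableAtFilter _ _) hg.continuousAt
  set u : ℝ → ℂ := fun r => Complex.exp (-(Complex.I * (G r : ℂ))) * f r with hu
  have hu' : ∀ r, HasDerivAt u 0 r := by
    intro r
    have hz : HasDerivAt (fun r => -(Complex.I * (G r : ℂ)))
        (-(Complex.I * (g r : ℂ))) r := by
      have h1 : HasDerivAt (fun r => ((G r : ℝ) : ℂ)) ((g r : ℝ) : ℂ) r :=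
        (hGd r).ofReal_comp
      exact ((h1.const_mul Complex.I).neg)
    have hexp := hz.cexp
    have := hexp.mul (hf r)
    convert this using 1
    · rfl
    · rfl
    · ring
  have huc : u x = u 0 := by
    exact is_const_of_deriv_eq_zero (fun r => (hu' r).differentiableAt)
      (fun r => (hu' r).deriv) x 0
  have hu0 : u 0 = f 0 := by
    simp [u, G, intervalIntegral.integral_same]
  have hux : Complex.exp (-(Complex.I * (G x : ℂ))) * f x = f 0 := by
    rw [← hu0]; exact huc
  have hne : Complex.exp (-(Complex.I * (G x : ℂ))) ≠ 0 := Complex.exp_ne_zero _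
  calc f x = Complex.exp (Complex.I * (G x : ℂ)) *
      (Complex.exp (-(Complex.I * (G x : ℂ))) * f x) := by
        rw [← mul_assoc, ← Complex.exp_add]
        simp
  _ = Complex.exp (Complex.I * (G x : ℂ)) * f 0 := by rw [hux]

set_option maxHeartbeats 1000000 in
/-- a smooth map `m : 𝕋² → 𝕊¹` on the torus `(ℝ/2πℤ)²` with
`∫_{𝕋²} |∇m|² < 4π²` admits a global lift `m = e^{iφ}`. -/
theorem stmt_10 (m : ℝ × ℝ → ℂ) (hm : ContDiff ℝ (⊤ : ℕ∞) m)
    (hS1 : ∀ p, ‖m p‖ = 1)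
    (hper : ∀ p : ℝ × ℝ, m (p.1 + 2 * π, p.2) = m p ∧ m (p.1, p.2 + 2 * π) = m p)
    (hE : (∫ p in Set.Ioc (0 : ℝ) (2 * π) ×ˢ Set.Ioc (0 : ℝ) (2 * π), gradSqC m p)
      < 4 * π ^ 2) :
    ∃ φ : ℝ × ℝ → ℝ, ContDiff ℝ (⊤ : ℕ∞) φ ∧
      (∀ p : ℝ × ℝ, φ (p.1 + 2 * π, p.2) = φ p ∧ φ (p.1, p.2 + 2 * π) = φ p) ∧
      ∀ p, m p = Complex.exp (Complex.I * (φ p : ℂ)) := by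
  have hπ : (0:ℝ) < π := Real.pi_pos
  set a : ℝ × ℝ → ℝ := fun q => (m q).re with ha_def
  set b : ℝ × ℝ → ℝ := fun q => (m q).im with hb_def
  have ha : ContDiff ℝ (⊤ : ℕ∞) a := Complex.reCLM.contDiff.comp hm
  have hb : ContDiff ℝ (⊤ : ℕ∞) b := Complex.imCLM.contDiff.comp hm
  have hmd : Differentiable ℝ m := hm.differentiable (by simp)
  have had : Differentiable ℝ a := ha.differentiable (by simp)
  have hbd : Differentiable ℝ b := hb.differentiable (by simp)
  have hab1 : ∀ p, a p ^ 2 + b p ^ 2 = 1 := by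
    intro p
    have h1 := hS1 p
    have h2 : ‖m p‖ ^ 2 = 1 := by rw [h1]; norm_num
    rw [Complex.sq_norm, Complex.normSq_apply] at h2
    simpa [a, b, sq] using h2
  -- derivative of components
  have hre : ∀ p (v : ℝ × ℝ), fderiv ℝ a p v = (fderiv ℝ m p v).re := by
    intro p v
    have h1 : HasFDerivAt a (Complex.reCLM.comp (fderiv ℝ m p)) p :=
      Complex.reCLM.hasFDerivAt.comp p (hmd p).hasFDerivAt
    rw [h1.fderiv]; rfl
  have him : ∀ p (v : ℝ × ℝ), fderiv ℝ b p v = (fderiv ℝ m p v).im := by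
    intro p v
    have h1 : HasFDerivAt b (Complex.imCLM.comp (fderiv ℝ m p)) p :=
      Complex.imCLM.hasFDerivAt.comp p (hmd p).hasFDerivAt
    rw [h1.fderiv]; rfl
  -- orthogonality
  have horth : ∀ p (v : ℝ × ℝ),
      a p * fderiv ℝ a p v + b p * fderiv ℝ b p v = 0 := by
    intro p v
    have hF : HasFDerivAt (fun q => a q * a q + b q * b q)
        ((a p • fderiv ℝ a p + a p • fderiv ℝ a p) +
          (b p • fderiv ℝ b p + b p • fderiv ℝ b p)) p :=
      (((had p).hasFDerivAt.mul (had p).hasFDerivAt)).add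
        (((hbd p).hasFDerivAt.mul (hbd p).hasFDerivAt))
    have heq : (fun q => a q * a q + b q * b q) = fun _ => (1:ℝ) := by
      funext q
      have := hab1 q
      nlinarith [hab1 q]
    rw [heq] at hF
    have h0 := hF.unique (hasFDerivAt_const 1 p)
    have h1 := congrArg (fun L => L v) h0
    simp only [ContinuousLinearMap.add_apply, ContinuousLinearMap.smul_apply,
      ContinuousLinearMap.zero_apply, smul_eq_mul] at h1
    push_cast at h1
    linarith
  -- key pointwise identity  m' = I ω m
  have hkey : ∀ p (v : ℝ × ℝ), fderiv ℝ m p v =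
      Complex.I * ((a p * fderiv ℝ b p v - b p * fderiv ℝ a p v : ℝ) : ℂ) * m p := by
    intro p v
    have h1 := horth p v
    have h2 := hab1 p
    apply Complex.ext
    · rw [← hre p v]
      simp only [Complex.mul_re, Complex.mul_im, Complex.I_re, Complex.I_im,
        Complex.ofReal_re, Complex.ofReal_im]
      show fderiv ℝ a p v = _
      have hmre : (m p).re = a p := rfl
      have hmim : (m p).im = b p := rfl
      rw [hmre, hmim]
      ring_nf
      linear_combination a p * h1 - fderiv ℝ a p v * h2
    · rw [← him p v]
      simp only [Complex.mul_re, Complex.mul_im, Complex.I_re, Complex.I_im,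
        Complex.ofReal_re, Complex.ofReal_im]
      show fderiv ℝ b p v = _
      have hmre : (m p).re = a p := rfl
      have hmim : (m p).im = b p := rfl
      rw [hmre, hmim]
      ring_nf
      linear_combination b p * h1 - fderiv ℝ b p v * h2
  -- the 1-form ω = a db - b da
  set w1 : ℝ × ℝ → ℝ := fun p => a p * fderiv ℝ b p (1,0) - b p * fderiv ℝ a p (1,0) with hw1
  set w2 : ℝ × ℝ → ℝ := fun p => a p * fderiv ℝ b p (0,1) - b p * fderiv ℝ a p (0,1) with hw2
  have hdv : ∀ (f : ℝ × ℝ → ℝ), ContDiff ℝ (⊤ : ℕ∞) f → ∀ v : ℝ × ℝ,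
      Continuous fun p => fderiv ℝ f p v := by
    intro f hf v
    exact (hf.continuous_fderiv (by simp)).clm_apply continuous_const
  have hw1c : Continuous w1 :=
    ((ha.continuous).mul (hdv b hb _)).sub ((hb.continuous).mul (hdv a ha _))
  have hw2c : Continuous w2 :=
    ((ha.continuous).mul (hdv b hb _)).sub ((hb.continuous).mul (hdv a ha _))
  -- derivative of m along horizontal and vertical lines
  have hline1 : ∀ (y t : ℝ), HasDerivAt (fun s => m (s, y))
      (Complex.I * ((w1 (t, y) : ℝ) : ℂ) * m (t, y)) t := by
    intro y t
    have h1 : HasDerivAt (fun s : ℝ => (s, y)) ((1:ℝ), (0:ℝ)) t :=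
      (hasDerivAt_id t).prodMk (hasDerivAt_const t y)
    have h2 := (hmd (t, y)).hasFDerivAt.comp_hasDerivAt t h1
    rwa [hkey (t, y) (1, 0)] at h2
  have hline2 : ∀ (x t : ℝ), HasDerivAt (fun s => m (x, s))
      (Complex.I * ((w2 (x, t) : ℝ) : ℂ) * m (x, t)) t := by
    intro x t
    have h1 : HasDerivAt (fun s : ℝ => (x, s)) ((0:ℝ), (1:ℝ)) t :=
      (hasDerivAt_const t x).prodMk (hasDerivAt_id t)
    have h2 := (hmd (x, t)).hasFDerivAt.comp_hasDerivAt t h1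
    rwa [hkey (x, t) (0, 1)] at h2
  -- starting phase
  set c : ℝ := Complex.arg (m (0, 0)) with hc_def
  have hc : Complex.exp (Complex.I * (c : ℂ)) = m (0, 0) := by
    have h := Complex.norm_mul_exp_arg_mul_I (m (0, 0))
    rw [hS1 (0, 0)] at h
    rw [mul_comm]
    simpa using h
  -- the lift
  set Φ : ℝ × ℝ → ℝ := fun p =>
    c + (∫ s in (0:ℝ)..p.2, w2 (0, s)) + ∫ t in (0:ℝ)..p.1, w1 (t, p.2) with hΦdef
  have hvert : ∀ y : ℝ, m (0, y) =
      Complex.exp (Complex.I * ((c + ∫ s in (0:ℝ)..y, w2 (0, s) : ℝ) : ℂ)) := by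
    intro y
    have hode := aux_ode (f := fun s => m (0, s)) (g := fun s => w2 (0, s))
      (fun r => hline2 0 r) (hw2c.comp (continuous_const.prodMk continuous_id)) y
    rw [hode, ← hc, ← Complex.exp_add]
    congr 1
    push_cast
    ring
  have hlift : ∀ p, m p = Complex.exp (Complex.I * ((Φ p : ℝ) : ℂ)) := by
    rintro ⟨x, y⟩
    have hode := aux_ode (f := fun s => m (s, y)) (g := fun s => w1 (s, y))
      (fun r => hline1 y r) (hw1c.comp (continuous_id.prodMk continuous_const)) x
    rw [hode, hvert y, ← Complex.exp_add]
    congr 1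
    show _ = Complex.I * ((Φ (x, y) : ℝ) : ℂ)
    simp only [hΦdef]
    push_cast
    ring
  -- continuity of Φ
  have hΦc : Continuous Φ := by
    apply (continuous_const.add ?_).add ?_
    · have h1 : Continuous fun r : ℝ => ∫ s in (0:ℝ)..r, w2 (0, s) :=
        intervalIntegral.continuous_primitive
          (fun a b => ((hw2c.comp (continuous_const.prodMk continuous_id)).intervalIntegrable a b)) 0
      exact h1.comp continuous_snd
    · have hcf : Continuous (Function.uncurry fun y t => w1 (t, y)) :=
        hw1c.comp continuous_swap
      have h2 : Continuous fun q : ℝ × ℝ => ∫ t in (0:ℝ)..q.2, w1 (t, q.1) :=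
        intervalIntegral.continuous_parametric_primitive_of_continuous hcf
      have h3 := h2.comp (continuous_swap : Continuous (Prod.swap : ℝ × ℝ → ℝ × ℝ))
      exact h3
  -- exp (I ψ) = m with ψ defined through log, near any point
  have hcancelI : ∀ (s t : ℝ) (n : ℤ), Complex.I * (s : ℂ) =
      Complex.I * (t : ℂ) + (n : ℂ) * (2 * (π : ℂ) * Complex.I) → s = t + 2 * π * n := by
    intro s t n h
    have h2 : Complex.I * (s : ℂ) = Complex.I * ((t + 2 * π * n : ℝ) : ℂ) := by
      rw [h]; push_cast; ring
    have h3 := mul_left_cancel₀ Complex.I_ne_zero h2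
    exact_mod_cast h3
  -- smoothness of Φ
  have hΦs : ContDiff ℝ (⊤ : ℕ∞) Φ := by
    rw [contDiff_iff_contDiffAt]
    intro p₀
    set c₀ : ℝ := Φ p₀ with hc₀
    set z : ℝ × ℝ → ℂ := fun p => m p * Complex.exp (-(Complex.I * (c₀ : ℂ))) with hz
    have hzc : ContDiff ℝ (⊤ : ℕ∞) z := hm.mul contDiff_const
    have hz0 : z p₀ = 1 := by
      simp only [hz, hlift p₀, ← Complex.exp_add]
      rw [← hc₀]; simp
    have habs : ∀ p, ‖z p‖ = 1 := by
      intro p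
      simp only [hz, norm_mul, hS1 p, Complex.norm_exp]
      norm_num
    have hopen : IsOpen {p : ℝ × ℝ | z p ∈ Complex.slitPlane} :=
      Complex.isOpen_slitPlane.preimage hzc.continuous
    have hp₀mem : p₀ ∈ {p : ℝ × ℝ | z p ∈ Complex.slitPlane} := by
      simp only [Set.mem_setOf_eq, hz0]
      exact Complex.one_mem_slitPlane
    obtain ⟨ε, hε, hball⟩ := Metric.isOpen_iff.mp hopen p₀ hp₀mem
    set ψ : ℝ × ℝ → ℝ := fun p => c₀ + (Complex.log (z p)).im with hψ
    have hψs : ∀ q ∈ Metric.ball p₀ ε, ContDiffAt ℝ (⊤ : ℕ∞) ψ q := by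
      intro q hq
      have h1 : ContDiffAt ℂ ⊤ Complex.log (z q) := Complex.contDiffAt_log (hball hq)
      have h2 : ContDiffAt ℝ (⊤ : ℕ∞) (fun p => Complex.log (z p)) q :=
        ((h1.restrict_scalars ℝ).of_le le_top).comp q hzc.contDiffAt
      exact contDiffAt_const.add (Complex.imCLM.contDiff.contDiffAt.comp q h2)
    have hψlift : ∀ q ∈ Metric.ball p₀ ε,
        Complex.exp (Complex.I * ((ψ q : ℝ) : ℂ)) = m q := by
      intro q _
      have harg : Complex.exp (((Complex.log (z q)).im : ℂ) * Complex.I) = z q := by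
        rw [Complex.log_im]
        have h := Complex.norm_mul_exp_arg_mul_I (z q)
        rw [habs q] at h
        simpa using h
      have : Complex.I * ((ψ q : ℝ) : ℂ) =
          Complex.I * (c₀ : ℂ) + ((Complex.log (z q)).im : ℂ) * Complex.I := by
        simp only [hψ]; push_cast; ring
      rw [this, Complex.exp_add, harg]
      simp only [hz]
      rw [mul_comm (Complex.exp _), mul_assoc, ← Complex.exp_add]
      simp
    have heq : ∀ q ∈ Metric.ball p₀ ε, Φ q = ψ q := by
      intro q hq
      have hint : ∀ q' ∈ Metric.ball p₀ ε, ∃ n : ℤ, ψ q' - Φ q' = 2 * π * n := by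
        intro q' hq'
        have h1 : Complex.exp (Complex.I * ((ψ q' : ℝ) : ℂ)) =
            Complex.exp (Complex.I * ((Φ q' : ℝ) : ℂ)) := by
          rw [hψlift q' hq', hlift q']
        rw [Complex.exp_eq_exp_iff_exists_int] at h1
        obtain ⟨n, hn⟩ := h1
        exact ⟨n, by have := hcancelI _ _ _ hn; linarith⟩
      have hcont : ContinuousOn (fun q' => ψ q' - Φ q') (Metric.ball p₀ ε) := by
        intro q' hq'
        exact (((hψs q' hq').continuousAt.sub hΦc.continuousAt)).continuousWithinAt
      have hconn : IsPreconnected (Metric.ball p₀ ε) := (convex_ball p₀ ε).isPreconnected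
      have h0 : ψ p₀ - Φ p₀ = 0 := by
        simp [hψ, hz0, Complex.log_one, ← hc₀]
      have := aux_int_const hconn hcont hint hq (Metric.mem_ball_self hε)
      rw [h0] at this
      linarith
    exact ((hψs p₀ (Metric.mem_ball_self hε)).congr_of_eventuallyEq
      (Filter.eventuallyEq_of_mem (Metric.ball_mem_nhds p₀ hε) heq))
  -- partial derivatives of Φ
  have hΦd : Differentiable ℝ Φ := hΦs.differentiable (by simp)
  set u1 : ℝ × ℝ → ℝ := fun p => fderiv ℝ Φ p (1, 0) with hu1
  set u2 : ℝ × ℝ → ℝ := fun p => fderiv ℝ Φ p (0, 1) with hu2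
  have hu1c : Continuous u1 := hdv Φ hΦs (1, 0)
  have hu2c : Continuous u2 := hdv Φ hΦs (0, 1)
  -- energy identity
  have hdcos : ∀ p (v : ℝ × ℝ), fderiv ℝ (fun q => Real.cos (Φ q)) p v =
      -Real.sin (Φ p) * fderiv ℝ Φ p v := by
    intro p v
    have h := (Real.hasDerivAt_cos (Φ p)).comp_hasFDerivAt p (hΦd p).hasFDerivAt
    rw [show (fun q => Real.cos (Φ q)) = Real.cos ∘ Φ from rfl, h.fderiv]
    simp
  have hdsin : ∀ p (v : ℝ × ℝ), fderiv ℝ (fun q => Real.sin (Φ q)) p v =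
      Real.cos (Φ p) * fderiv ℝ Φ p v := by
    intro p v
    have h := (Real.hasDerivAt_sin (Φ p)).comp_hasFDerivAt p (hΦd p).hasFDerivAt
    rw [show (fun q => Real.sin (Φ q)) = Real.sin ∘ Φ from rfl, h.fderiv]
    simp
  have hre2 : (fun q => (m q).re) = fun q => Real.cos (Φ q) := by
    funext q
    rw [hlift q, mul_comm Complex.I, Complex.exp_ofReal_mul_I_re]
  have him2 : (fun q => (m q).im) = fun q => Real.sin (Φ q) := by
    funext q
    rw [hlift q, mul_comm Complex.I, Complex.exp_ofReal_mul_I_im]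
  have hgrad : ∀ p, gradSqC m p = u1 p ^ 2 + u2 p ^ 2 := by
    intro p
    simp only [gradSqC, dx, dy, hre2, him2, hdcos, hdsin]
    nlinarith [Real.sin_sq_add_cos_sq (Φ p)]
  -- degrees
  set g1 : ℝ × ℝ → ℝ := fun p => Φ (p.1 + 2 * π, p.2) - Φ p with hg1
  set g2 : ℝ × ℝ → ℝ := fun p => Φ (p.1, p.2 + 2 * π) - Φ p with hg2
  have hg1c : Continuous g1 :=
    (hΦc.comp ((continuous_fst.add continuous_const).prodMk continuous_snd)).sub hΦc
  have hg2c : Continuous g2 :=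
    (hΦc.comp (continuous_fst.prodMk (continuous_snd.add continuous_const))).sub hΦc
  have hg1int : ∀ p, ∃ n : ℤ, g1 p = 2 * π * n := by
    intro p
    have h1 : Complex.exp (Complex.I * ((Φ (p.1 + 2 * π, p.2) : ℝ) : ℂ)) =
        Complex.exp (Complex.I * ((Φ p : ℝ) : ℂ)) := by
      rw [← hlift, ← hlift]
      exact (hper p).1
    rw [Complex.exp_eq_exp_iff_exists_int] at h1
    obtain ⟨n, hn⟩ := h1
    exact ⟨n, by have := hcancelI _ _ _ hn; simp only [hg1]; linarith⟩
  have hg2int : ∀ p, ∃ n : ℤ, g2 p = 2 * π * n := by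
    intro p
    have h1 : Complex.exp (Complex.I * ((Φ (p.1, p.2 + 2 * π) : ℝ) : ℂ)) =
        Complex.exp (Complex.I * ((Φ p : ℝ) : ℂ)) := by
      rw [← hlift, ← hlift]
      exact (hper p).2
    rw [Complex.exp_eq_exp_iff_exists_int] at h1
    obtain ⟨n, hn⟩ := h1
    exact ⟨n, by have := hcancelI _ _ _ hn; simp only [hg2]; linarith⟩
  obtain ⟨k1, hk1⟩ := hg1int (0, 0)
  obtain ⟨k2, hk2⟩ := hg2int (0, 0)
  have hK1 : ∀ p, g1 p = 2 * π * k1 := by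
    intro p
    rw [← hk1]
    exact aux_int_const isPreconnected_univ hg1c.continuousOn (fun q _ => hg1int q)
      (Set.mem_univ p) (Set.mem_univ (0, 0))
  have hK2 : ∀ p, g2 p = 2 * π * k2 := by
    intro p
    rw [← hk2]
    exact aux_int_const isPreconnected_univ hg2c.continuousOn (fun q _ => hg2int q)
      (Set.mem_univ p) (Set.mem_univ (0, 0))
  -- fundamental theorem of calculus along lines
  have hftc1 : ∀ y : ℝ, ∫ t in (0:ℝ)..(2 * π), u1 (t, y) = 2 * π * k1 := by
    intro y
    have hd : ∀ t ∈ Set.uIcc (0:ℝ) (2 * π), HasDerivAt (fun s => Φ (s, y)) (u1 (t, y)) t := by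
      intro t _
      have h1 : HasDerivAt (fun s : ℝ => (s, y)) ((1:ℝ), (0:ℝ)) t :=
        (hasDerivAt_id t).prodMk (hasDerivAt_const t y)
      exact (hΦd (t, y)).hasFDerivAt.comp_hasDerivAt t h1
    rw [intervalIntegral.integral_eq_sub_of_hasDerivAt hd
      ((hu1c.comp (continuous_id.prodMk continuous_const)).intervalIntegrable _ _)]
    have h2 := hK1 (0, y)
    simp only [hg1] at h2
    simpa using h2
  have hftc2 : ∀ x : ℝ, ∫ t in (0:ℝ)..(2 * π), u2 (x, t) = 2 * π * k2 := by
    intro x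
    have hd : ∀ t ∈ Set.uIcc (0:ℝ) (2 * π), HasDerivAt (fun s => Φ (x, s)) (u2 (x, t)) t := by
      intro t _
      have h1 : HasDerivAt (fun s : ℝ => (x, s)) ((0:ℝ), (1:ℝ)) t :=
        (hasDerivAt_const t x).prodMk (hasDerivAt_id t)
      exact (hΦd (x, t)).hasFDerivAt.comp_hasDerivAt t h1
    rw [intervalIntegral.integral_eq_sub_of_hasDerivAt hd
      ((hu2c.comp (continuous_const.prodMk continuous_id)).intervalIntegrable _ _)]
    have h2 := hK2 (x, 0)
    simp only [hg2] at h2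
    simpa using h2
  -- integrability set-up
  set Q : Set (ℝ × ℝ) := Set.Ioc (0:ℝ) (2 * π) ×ˢ Set.Ioc (0:ℝ) (2 * π) with hQdef
  have hQsub : Q ⊆ Set.Icc (0:ℝ) (2 * π) ×ˢ Set.Icc (0:ℝ) (2 * π) :=
    Set.prod_mono Set.Ioc_subset_Icc_self Set.Ioc_subset_Icc_self
  have hIntOn : ∀ f : ℝ × ℝ → ℝ, Continuous f → IntegrableOn f Q := by
    intro f hf
    exact ((hf.continuousOn).integrableOn_compact
      (isCompact_Icc.prod isCompact_Icc)).mono_set hQsub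
  set ν : Measure ℝ := volume.restrict (Set.Ioc (0:ℝ) (2 * π)) with hν
  have hνuniv : (ν Set.univ).toReal = 2 * π := by
    rw [hν, Measure.restrict_apply_univ, Real.volume_Ioc]
    rw [ENNReal.toReal_ofReal (by linarith)]
    ring
  have hνfin : IsFiniteMeasure ν := by
    constructor
    rw [hν, Measure.restrict_apply_univ, Real.volume_Ioc]
    exact ENNReal.ofReal_lt_top
  have hprodν : ν.prod ν = volume.restrict Q := by
    rw [hν, Measure.prod_restrict, hQdef, ← Measure.volume_eq_prod]
  -- per-line lower bounds from Cauchy-Schwarz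
  have hline_bd1 : ∀ y : ℝ, 2 * π * (k1:ℝ)^2 ≤ ∫ x in Set.Ioc (0:ℝ) (2 * π), u1 (x, y)^2 := by
    intro y
    have hcs := aux_cs (h := fun t => u1 (t, y))
      (hu1c.comp (continuous_id.prodMk continuous_const)) (T := 2 * π) (by positivity)
    rw [hftc1 y] at hcs
    rw [intervalIntegral.integral_of_le (by positivity : (0:ℝ) ≤ 2 * π)] at hcs
    nlinarith [hcs, hπ, sq_nonneg ((k1:ℝ))]
  have hline_bd2 : ∀ x : ℝ, 2 * π * (k2:ℝ)^2 ≤ ∫ y in Set.Ioc (0:ℝ) (2 * π), u2 (x, y)^2 := by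
    intro x
    have hcs := aux_cs (h := fun t => u2 (x, t))
      (hu2c.comp (continuous_const.prodMk continuous_id)) (T := 2 * π) (by positivity)
    rw [hftc2 x] at hcs
    rw [intervalIntegral.integral_of_le (by positivity : (0:ℝ) ≤ 2 * π)] at hcs
    nlinarith [hcs, hπ, sq_nonneg ((k2:ℝ))]
  -- Fubini and the energy bound
  have hint1 : Integrable (fun p : ℝ × ℝ => u1 p ^ 2) (ν.prod ν) := by
    rw [hprodν]; exact hIntOn _ (hu1c.pow 2)
  have hint2 : Integrable (fun p : ℝ × ℝ => u2 p ^ 2) (ν.prod ν) := by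
    rw [hprodν]; exact hIntOn _ (hu2c.pow 2)
  have hgc : Continuous (gradSqC m) := by
    have h : gradSqC m = fun p => u1 p ^ 2 + u2 p ^ 2 := funext hgrad
    rw [h]
    exact (hu1c.pow 2).add (hu2c.pow 2)
  have hEbd1 : ∫ p in Q, u1 p ^ 2 ≤ ∫ p in Q, gradSqC m p := by
    apply setIntegral_mono (hIntOn _ (hu1c.pow 2)) (hIntOn _ hgc)
    intro p
    show u1 p ^ 2 ≤ gradSqC m p
    have := hgrad p
    nlinarith [sq_nonneg (u2 p)]
  have hEbd2 : ∫ p in Q, u2 p ^ 2 ≤ ∫ p in Q, gradSqC m p := by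
    apply setIntegral_mono (hIntOn _ (hu2c.pow 2)) (hIntOn _ hgc)
    intro p
    show u2 p ^ 2 ≤ gradSqC m p
    have := hgrad p
    nlinarith [sq_nonneg (u1 p)]
  have key1 : 2 * π * (2 * π * (k1:ℝ)^2) ≤ ∫ p in Q, u1 p ^ 2 := by
    have hswap : ∫ p in Q, u1 p ^ 2 =
        ∫ y, (∫ x, u1 (x, y)^2 ∂ν) ∂ν := by
      rw [show (∫ p in Q, u1 p ^ 2) = ∫ p, u1 p ^ 2 ∂(ν.prod ν) by rw [hprodν]]
      exact MeasureTheory.integral_prod_symm _ hint1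
    rw [hswap]
    have hconst : (2:ℝ) * π * (2 * π * (k1:ℝ)^2) = ∫ _, (2 * π * (k1:ℝ)^2) ∂ν := by
      rw [integral_const, measureReal_def, hνuniv, smul_eq_mul]
    rw [hconst]
    exact integral_mono (integrable_const _) hint1.integral_prod_right
      (fun y => hline_bd1 y)
  have key2 : 2 * π * (2 * π * (k2:ℝ)^2) ≤ ∫ p in Q, u2 p ^ 2 := by
    have hswap : ∫ p in Q, u2 p ^ 2 =
        ∫ x, (∫ y, u2 (x, y)^2 ∂ν) ∂ν := by
      rw [show (∫ p in Q, u2 p ^ 2) = ∫ p, u2 p ^ 2 ∂(ν.prod ν) by rw [hprodν]]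
      exact MeasureTheory.integral_prod _ hint2
    rw [hswap]
    have hconst : (2:ℝ) * π * (2 * π * (k2:ℝ)^2) = ∫ _, (2 * π * (k2:ℝ)^2) ∂ν := by
      rw [integral_const, measureReal_def, hνuniv, smul_eq_mul]
    rw [hconst]
    exact integral_mono (integrable_const _) hint2.integral_prod_left
      (fun x => hline_bd2 x)
  -- conclude that the degrees vanish
  have hk1z : k1 = 0 := by
    by_contra hne
    have h1 : (1:ℝ) ≤ |(k1:ℝ)| := by
      have : (1:ℤ) ≤ |k1| := Int.one_le_abs (by omega)
      calc (1:ℝ) = ((1:ℤ):ℝ) := by norm_num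
      _ ≤ ((|k1|:ℤ):ℝ) := by exact_mod_cast this
      _ = |(k1:ℝ)| := by push_cast; ring
    have h2 : (1:ℝ) ≤ (k1:ℝ)^2 := by nlinarith [abs_nonneg ((k1:ℝ)), sq_abs ((k1:ℝ))]
    nlinarith [key1, hEbd1, hE, hπ]
  have hk2z : k2 = 0 := by
    by_contra hne
    have h1 : (1:ℝ) ≤ |(k2:ℝ)| := by
      have : (1:ℤ) ≤ |k2| := Int.one_le_abs (by omega)
      calc (1:ℝ) = ((1:ℤ):ℝ) := by norm_num
      _ ≤ ((|k2|:ℤ):ℝ) := by exact_mod_cast this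
      _ = |(k2:ℝ)| := by push_cast; ring
    have h2 : (1:ℝ) ≤ (k2:ℝ)^2 := by nlinarith [abs_nonneg ((k2:ℝ)), sq_abs ((k2:ℝ))]
    nlinarith [key2, hEbd2, hE, hπ]
  -- conclusion
  refine ⟨Φ, hΦs, fun p => ⟨?_, ?_⟩, hlift⟩
  · have h := hK1 p
    rw [hk1z] at h
    simp only [hg1, Int.cast_zero, mul_zero] at h
    linarith
  · have h := hK2 p
    rw [hk2z] at h
    simp only [hg2, Int.cast_zero, mul_zero] at h
    linarith
end
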